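/- For every separable state ρ on ℋ_A ⊗ ℋ_B and every δ > 0 there exist N ≥ 1 and an operator σ ∈ 𝒮̃^N with tr σ = 1 such that ‖ρ − σ‖₁ < δ. Consequently, the union over N of the sets 𝒮̃^N is trace-norm dense in the set of separable states (convergence of the inner approximation). -/

import Mathlib

open Matrix MeasureTheory
open scoped Kronecker BigOperators ENNReal ComplexOrder

noncomputable section

namespace SepPaper

/-- The rank-one operator `|ψ⟩⟨ψ|`. -/
def proj {n : Type*} (ψ : n → ℂ) : Matrix n n ℂ := Matrix.vecMulVec ψ (star ψ)

/-- `Λ` is a separable operator on `ℂ^{dA} ⊗ ℂ^{d}`: a finite conical combination of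
pure product operators `|ψ⟩⟨ψ| ⊗ |φ⟩⟨φ|`. -/
def IsSeparable (dA d : ℕ) (Λ : Matrix (Fin dA × Fin d) (Fin dA × Fin d) ℂ) : Prop :=
  ∃ (k : ℕ) (c : Fin k → ℝ) (ψ : Fin k → (Fin dA → ℂ)) (φ : Fin k → (Fin d → ℂ)),
    (∀ i, 0 ≤ c i) ∧
    Λ = ∑ i, (c i : ℂ) • (proj (ψ i) ⊗ₖ proj (φ i))

/-- Partial trace over the `B` system. -/
def trB {dA d : ℕ} (M : Matrix (Fin dA × Fin d) (Fin dA × Fin d) ℂ) :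
    Matrix (Fin dA) (Fin dA) ℂ :=
  fun a a' => ∑ b : Fin d, M (a, b) (a', b)

/-- Index type of `ℋ_A ⊗ ℋ_B ⊗ ℋ_B^{⊗(N-1)} = ℋ_A ⊗ ℋ_B^{⊗N}` (for `N ≥ 1`). -/
abbrev ExtIdx (dA d N : ℕ) := Fin dA × Fin d × (Fin (N - 1) → Fin d)

/-- The orthogonal projector onto the symmetric subspace of `(ℂ^d)^{⊗N}`,
realized as the average of all permutation operators. -/
def symProj (d N : ℕ) : Matrix (Fin N → Fin d) (Fin N → Fin d) ℂ :=
  (N.factorial : ℂ)⁻¹ •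
    ∑ π : Equiv.Perm (Fin N), Matrix.of (fun f g => if (fun i => g (π i)) = f then (1 : ℂ) else 0)

/-- Identification of `ℂ^d ⊗ (ℂ^d)^{⊗(N-1)}` with `(ℂ^d)^{⊗((N-1)+1)}`. -/
def bEquiv (d N : ℕ) : (Fin d × (Fin (N - 1) → Fin d)) ≃ (Fin (N - 1 + 1) → Fin d) :=
  Fin.consEquiv (fun _ => Fin d)

/-- The symmetric projector on the `N = (N-1)+1` copies of `ℂ^d`,
viewed on the index type `Fin d × (Fin (N-1) → Fin d)`. -/
def symProjB (d N : ℕ) : Matrix (Fin d × (Fin (N - 1) → Fin d)) (Fin d × (Fin (N - 1) → Fin d)) ℂ :=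
  Matrix.reindex (bEquiv d N).symm (bEquiv d N).symm (symProj d (N - 1 + 1))

/-- Partial trace over the last `N-1` copies of `ℋ_B`. -/
def ptraceExt {dA d N : ℕ} (M : Matrix (ExtIdx dA d N) (ExtIdx dA d N) ℂ) :
    Matrix (Fin dA × Fin d) (Fin dA × Fin d) ℂ :=
  fun p q => ∑ g : Fin (N - 1) → Fin d, M (p.1, p.2, g) (q.1, q.2, g)

/-- Membership in `𝒮^N`: existence of a positive semidefinite Bose-symmetric
`N`-extension. -/
def MemSN (dA d N : ℕ) (Λ : Matrix (Fin dA × Fin d) (Fin dA × Fin d) ℂ) : Prop :=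
  ∃ Λext : Matrix (ExtIdx dA d N) (ExtIdx dA d N) ℂ,
    Λext.PosSemidef ∧ ptraceExt Λext = Λ ∧
    Λext * ((1 : Matrix (Fin dA) (Fin dA) ℂ) ⊗ₖ symProjB d N) = Λext

/-- Partial transpose of an operator on `ℋ_A ⊗ ℋ_B^{⊗N}` w.r.t. the bipartition
`(A and the first ⌈N/2⌉ copies of B) | (the last ⌊N/2⌋ copies of B)`.
Copy `0` of `B` is the explicit factor and the extra copy `i : Fin (N-1)` is copy
`i+1`; copy `j` is transposed iff `⌈N/2⌉ = (N+1)/2 ≤ j`. -/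
def pt {dA d N : ℕ} (M : Matrix (ExtIdx dA d N) (ExtIdx dA d N) ℂ) :
    Matrix (ExtIdx dA d N) (ExtIdx dA d N) ℂ :=
  fun p q =>
    M (p.1, p.2.1, fun i => if (N + 1) / 2 ≤ (i : ℕ) + 1 then q.2.2 i else p.2.2 i)
      (q.1, q.2.1, fun i => if (N + 1) / 2 ≤ (i : ℕ) + 1 then p.2.2 i else q.2.2 i)

/-- Membership in `𝒮_p^N`: existence of a positive semidefinite Bose-symmetric
`N`-extension which is moreover PPT w.r.t. the bipartition
`A B^{⌈N/2⌉} | B^{⌊N/2⌋}`. -/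
def MemSNp (dA d N : ℕ) (Λ : Matrix (Fin dA × Fin d) (Fin dA × Fin d) ℂ) : Prop :=
  ∃ Λext : Matrix (ExtIdx dA d N) (ExtIdx dA d N) ℂ,
    Λext.PosSemidef ∧ ptraceExt Λext = Λ ∧
    Λext * ((1 : Matrix (Fin dA) (Fin dA) ℂ) ⊗ₖ symProjB d N) = Λext ∧
    (pt Λext).PosSemidef

/-- Membership in `𝒮̃^N = {(N/(N+d)) σ + (1/(N+d)) σ_A ⊗ 𝕀_B : σ ∈ 𝒮^N}`. -/
def MemStildeN (dA d N : ℕ) (Λ : Matrix (Fin dA × Fin d) (Fin dA × Fin d) ℂ) : Prop :=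
  ∃ σ, MemSN dA d N σ ∧
    Λ = ((N : ℂ) / ((N : ℂ) + d)) • σ +
        (1 / ((N : ℂ) + d)) • (trB σ ⊗ₖ (1 : Matrix (Fin d) (Fin d) ℂ))

/-- The Jacobi polynomial `P_n^{(α,β)}` (for natural parameters `α, β`). -/
def jacobiP (n α β : ℕ) (x : ℝ) : ℝ :=
  ∑ s ∈ Finset.range (n + 1),
    (Nat.choose (n + α) (n - s) : ℝ) * (Nat.choose (n + β) s : ℝ) *
      ((x - 1) / 2) ^ s * ((x + 1) / 2) ^ (n - s)

/-- `ε_N = (d/(2(d-1))) · min {1 - x : P_{⌊N/2⌋+1}^{(d-2, N mod 2)}(x) = 0}`. -/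
def epsN (d N : ℕ) : ℝ :=
  ((d : ℝ) / (2 * ((d : ℝ) - 1))) *
    sInf {y : ℝ | ∃ x : ℝ, y = 1 - x ∧ jacobiP (N / 2 + 1) (d - 2) (N % 2) x = 0}

/-- Membership in `𝒮̃_p^N = {(1-ε_N) σ + ε_N σ_A ⊗ 𝕀_B/d : σ ∈ 𝒮_p^N}`. -/
def MemStildeNp (dA d N : ℕ) (Λ : Matrix (Fin dA × Fin d) (Fin dA × Fin d) ℂ) : Prop :=
  ∃ σ, MemSNp dA d N σ ∧
    Λ = ((1 : ℂ) - (epsN d N : ℂ)) • σ +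
        ((epsN d N : ℂ) / d) • (trB σ ⊗ₖ (1 : Matrix (Fin d) (Fin d) ℂ))

/-- The positive semidefinite square root of a positive semidefinite matrix
(the definition of `Matrix.PosSemidef.sqrt` in the older Mathlib). -/
def PosSemidef.sqrt {n : Type*} [Fintype n] [DecidableEq n] {A : Matrix n n ℂ}
    (hA : A.PosSemidef) : Matrix n n ℂ :=
  hA.1.eigenvectorUnitary.1 * diagonal ((↑) ∘ Real.sqrt ∘ hA.1.eigenvalues) *
    (star hA.1.eigenvectorUnitary : Matrix n n ℂ)

/-- The trace norm `‖Z‖₁ = tr √(Z Zᴴ)`. -/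
def traceNorm {n : Type*} [Fintype n] [DecidableEq n] (Z : Matrix n n ℂ) : ℝ :=
  ((PosSemidef.sqrt (Matrix.posSemidef_self_mul_conjTranspose Z)).trace).re

/-- The operator norm `‖Z‖_∞` (largest singular value), as the norm of the induced
operator on Euclidean space. -/
def opNorm {n : Type*} [Fintype n] [DecidableEq n] (Z : Matrix n n ℂ) : ℝ :=
  ‖LinearMap.toContinuousLinearMap (Matrix.toEuclideanLin Z)‖

/-- `(|φ⟩⟨φ|)^{⊗N}` on `ℋ_B^{⊗N} = ℋ_B ⊗ ℋ_B^{⊗(N-1)}`. -/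
def projPowExt {d : ℕ} (N : ℕ) (φ : Fin d → ℂ) :
    Matrix (Fin d × (Fin (N - 1) → Fin d)) (Fin d × (Fin (N - 1) → Fin d)) ℂ :=
  fun p q => proj φ p.1 q.1 * ∏ i, proj φ (p.2 i) (q.2 i)

/-- The optimal fidelity `F = sup {tr(ρ Λ) : Λ ∈ 𝒮, tr_B Λ = 𝕀_A}`. -/
def fid (dA d : ℕ) (ρ : Matrix (Fin dA × Fin d) (Fin dA × Fin d) ℂ) : ℝ :=
  sSup {r : ℝ | ∃ Λ, IsSeparable dA d Λ ∧ trB Λ = 1 ∧ r = ((ρ * Λ).trace).re}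

/-- `F̃^N = sup {tr(ρ Λ) : Λ ∈ 𝒮̃^N, tr_B Λ = 𝕀_A}`. -/
def fidTildeN (dA d N : ℕ) (ρ : Matrix (Fin dA × Fin d) (Fin dA × Fin d) ℂ) : ℝ :=
  sSup {r : ℝ | ∃ Λ, MemStildeN dA d N Λ ∧ trB Λ = 1 ∧ r = ((ρ * Λ).trace).re}

/-- `F̃_p^N = sup {tr(ρ Λ) : Λ ∈ 𝒮̃_p^N, tr_B Λ = 𝕀_A}`. -/
def fidTildeNp (dA d N : ℕ) (ρ : Matrix (Fin dA × Fin d) (Fin dA × Fin d) ℂ) : ℝ :=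
  sSup {r : ℝ | ∃ Λ, MemStildeNp dA d N Λ ∧ trB Λ = 1 ∧ r = ((ρ * Λ).trace).re}

/-- Robustness relative to a set `T` of operators:
`R_T(ρ) = inf {tr σ : σ ∈ T, ρ + σ ∈ T}` (with `inf ∅ = +∞`). -/
def rob {dA d : ℕ} (T : Set (Matrix (Fin dA × Fin d) (Fin dA × Fin d) ℂ))
    (ρ : Matrix (Fin dA × Fin d) (Fin dA × Fin d) ℂ) : ℝ≥0∞ :=
  sInf {t : ℝ≥0∞ | ∃ σ ∈ T, ρ + σ ∈ T ∧ t = ENNReal.ofReal ((σ.trace).re)}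

/-!
A separable state is extendible to any number `N` of copies of `B`: a product term
`|ψ⟩⟨ψ| ⊗ |φ⟩⟨φ|` is the marginal of the Bose-symmetric operator `|ψ⟩⟨ψ| ⊗ (|φ⟩⟨φ|)^{⊗N}` up to
the factor `‖φ‖^{2(N-1)}`, and `𝒮^N` is a convex cone. So `ρ ∈ 𝒮^N` for every `N`, and its image
`(N/(N+d)) ρ + (1/(N+d)) ρ_A ⊗ 𝕀_B ∈ 𝒮̃^N` is a state differing from `ρ` by
`(d ρ - ρ_A ⊗ 𝕀_B)/(N+d)`, whose trace norm tends to `0`.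
-/

section TraceNorm

open scoped MatrixOrder

variable {n : Type*} [Fintype n] [DecidableEq n]

lemma PosSemidef.sqrt_eq_cfcSqrt {A : Matrix n n ℂ} (hA : A.PosSemidef) :
    PosSemidef.sqrt hA = CFC.sqrt A := by
  rw [CFC.sqrt_eq_cfc, cfc_nnreal_eq_real _ A hA.nonneg, hA.1.cfc_eq]
  simp only [IsHermitian.cfc, Unitary.conjStarAlgAut_apply, PosSemidef.sqrt]
  congr 3
  funext i
  simp only [Function.comp_apply, Real.coe_sqrt, Real.coe_toNNReal',
    max_eq_left (hA.eigenvalues_nonneg i)]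
  rfl

lemma traceNorm_eq_re_trace_cfcSqrt (Z : Matrix n n ℂ) :
    traceNorm Z = (CFC.sqrt (Z * Zᴴ)).trace.re := by
  rw [traceNorm, PosSemidef.sqrt_eq_cfcSqrt]

lemma traceNorm_ofReal_smul {r : ℝ} (hr : 0 ≤ r) (Z : Matrix n n ℂ) :
    traceNorm ((r : ℂ) • Z) = r * traceNorm Z := by
  have hsqrt : CFC.sqrt (((r : ℂ) • Z) * ((r : ℂ) • Z)ᴴ) = (r : ℂ) • CFC.sqrt (Z * Zᴴ) := by
    refine CFC.sqrt_unique ?_ ((CFC.sqrt_nonneg _).posSemidef.smul (by exact_mod_cast hr)).nonneg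
    rw [smul_mul_smul_comm, CFC.sqrt_mul_sqrt_self _ (posSemidef_self_mul_conjTranspose Z).nonneg,
      conjTranspose_smul, smul_mul_smul_comm, Complex.star_def, Complex.conj_ofReal]
  rw [traceNorm_eq_re_trace_cfcSqrt, traceNorm_eq_re_trace_cfcSqrt, hsqrt, trace_smul,
    smul_eq_mul, Complex.re_ofReal_mul]

end TraceNorm

lemma proj_mul_symProj {d M : ℕ} {v : (Fin M → Fin d) → ℂ}
    (hv : ∀ (π : Equiv.Perm (Fin M)) f, v (f ∘ π) = v f) :
    proj v * symProj d M = proj v := by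
  have hperm : ∀ π : Equiv.Perm (Fin M),
      proj v * of (fun f g => if (fun i => g (π i)) = f then (1 : ℂ) else 0) = proj v := by
    intro π
    ext f g
    simp only [mul_apply, of_apply, mul_ite, mul_one, mul_zero, Finset.sum_ite_eq,
      Finset.mem_univ, if_true, proj, vecMulVec_apply, Pi.star_apply]
    exact congrArg (fun z => v f * star z) (hv π g)
  rw [symProj, Matrix.mul_smul, Matrix.mul_sum, Finset.sum_congr rfl fun π _ => hperm π,
    Finset.sum_const, Finset.card_univ, Fintype.card_perm, Fintype.card_fin,
    ← Nat.cast_smul_eq_nsmul ℂ, smul_smul,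
    inv_mul_cancel₀ (Nat.cast_ne_zero.mpr M.factorial_ne_zero), one_smul]

lemma projPowExt_eq_submatrix {d : ℕ} (N : ℕ) (φ : Fin d → ℂ) :
    projPowExt N φ =
      (proj fun f : Fin (N - 1 + 1) → Fin d => ∏ j, φ (f j)).submatrix
        (bEquiv d N) (bEquiv d N) := by
  ext p q
  simp only [projPowExt, proj, submatrix_apply, vecMulVec_apply, Pi.star_apply, bEquiv,
    Fin.consEquiv_apply, Fin.prod_univ_succ, Fin.cons_zero, Fin.cons_succ, star_mul, star_prod,
    Finset.prod_mul_distrib]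
  ring

lemma posSemidef_projPowExt {d : ℕ} (N : ℕ) (φ : Fin d → ℂ) : (projPowExt N φ).PosSemidef := by
  rw [projPowExt_eq_submatrix]
  exact (posSemidef_vecMulVec_self_star _).submatrix _

lemma projPowExt_mul_symProjB {d : ℕ} (N : ℕ) (φ : Fin d → ℂ) :
    projPowExt N φ * symProjB d N = projPowExt N φ := by
  rw [projPowExt_eq_submatrix, symProjB, reindex_apply, Equiv.symm_symm, submatrix_mul_equiv,
    proj_mul_symProj fun π f => Equiv.prod_comp π fun j => φ (f j)]

lemma ptraceExt_kronecker_projPowExt {dA d : ℕ} (N : ℕ) (ψ : Fin dA → ℂ) (φ : Fin d → ℂ) :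
    ptraceExt (proj ψ ⊗ₖ projPowExt N φ) = (proj φ).trace ^ (N - 1) • (proj ψ ⊗ₖ proj φ) := by
  ext ⟨a, b⟩ ⟨a', b'⟩
  simp only [ptraceExt, kroneckerMap_apply, projPowExt, Matrix.smul_apply, smul_eq_mul,
    ← Finset.mul_sum]
  rw [← Fintype.prod_sum (fun _ c => proj φ c c), Finset.prod_const, Finset.card_univ,
    Fintype.card_fin, trace]
  simp only [diag_apply]
  ring

section MemSN

variable {dA d N : ℕ}

lemma ptraceExt_add (M M' : Matrix (ExtIdx dA d N) (ExtIdx dA d N) ℂ) :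
    ptraceExt (M + M') = ptraceExt M + ptraceExt M' := by
  ext p q
  exact Finset.sum_add_distrib

lemma ptraceExt_smul (c : ℂ) (M : Matrix (ExtIdx dA d N) (ExtIdx dA d N) ℂ) :
    ptraceExt (c • M) = c • ptraceExt M := by
  ext p q
  exact (Finset.mul_sum _ _ _).symm

lemma memSN_zero : MemSN dA d N 0 :=
  ⟨0, .zero, by ext; simp [ptraceExt], zero_mul _⟩

lemma MemSN.add {Λ Λ' : Matrix (Fin dA × Fin d) (Fin dA × Fin d) ℂ}
    (h : MemSN dA d N Λ) (h' : MemSN dA d N Λ') : MemSN dA d N (Λ + Λ') := by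
  obtain ⟨E, hE, rfl, hEsym⟩ := h
  obtain ⟨E', hE', rfl, hE'sym⟩ := h'
  exact ⟨E + E', hE.add hE', ptraceExt_add E E', by rw [add_mul, hEsym, hE'sym]⟩

lemma MemSN.smul {Λ : Matrix (Fin dA × Fin d) (Fin dA × Fin d) ℂ} (h : MemSN dA d N Λ)
    {c : ℂ} (hc : 0 ≤ c) : MemSN dA d N (c • Λ) := by
  obtain ⟨E, hE, rfl, hEsym⟩ := h
  exact ⟨c • E, hE.smul hc, ptraceExt_smul c E, by rw [Matrix.smul_mul, hEsym]⟩

lemma memSN_proj_kronecker_proj (ψ : Fin dA → ℂ) (φ : Fin d → ℂ) :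
    MemSN dA d N (proj ψ ⊗ₖ proj φ) := by
  have hext : MemSN dA d N ((proj φ).trace ^ (N - 1) • (proj ψ ⊗ₖ proj φ)) :=
    ⟨proj ψ ⊗ₖ projPowExt N φ, (posSemidef_vecMulVec_self_star ψ).kronecker
      (posSemidef_projPowExt N φ), ptraceExt_kronecker_projPowExt N ψ φ,
      by rw [← mul_kronecker_mul, Matrix.mul_one, projPowExt_mul_symProjB]⟩
  rcases eq_or_ne (proj φ).trace 0 with htr | htr
  · have hφ : proj φ = 0 := (posSemidef_vecMulVec_self_star φ).trace_eq_zero_iff.mp htr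
    rw [hφ, kronecker_zero]
    exact memSN_zero
  · have hpow : 0 < (proj φ).trace ^ (N - 1) :=
      pow_pos ((posSemidef_vecMulVec_self_star φ).trace_nonneg.lt_of_ne htr.symm) _
    simpa only [smul_smul, inv_mul_cancel₀ hpow.ne', one_smul] using
      hext.smul (inv_nonneg.mpr hpow.le)

lemma memSN_of_isSeparable {Λ : Matrix (Fin dA × Fin d) (Fin dA × Fin d) ℂ}
    (h : IsSeparable dA d Λ) : MemSN dA d N Λ := by
  obtain ⟨k, c, ψ, φ, hc, rfl⟩ := h
  exact Finset.sum_induction _ _ (fun _ _ => MemSN.add) memSN_zero fun i _ =>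
    (memSN_proj_kronecker_proj (ψ i) (φ i)).smul (Complex.zero_le_real.mpr (hc i))

end MemSN

section Stilde

variable {dA d : ℕ}

def stildeMap (N : ℕ) (σ : Matrix (Fin dA × Fin d) (Fin dA × Fin d) ℂ) :
    Matrix (Fin dA × Fin d) (Fin dA × Fin d) ℂ :=
  ((N : ℂ) / ((N : ℂ) + d)) • σ + (1 / ((N : ℂ) + d)) • (trB σ ⊗ₖ (1 : Matrix (Fin d) (Fin d) ℂ))

lemma trace_trB (M : Matrix (Fin dA × Fin d) (Fin dA × Fin d) ℂ) : (trB M).trace = M.trace :=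
  (Fintype.sum_prod_type fun p => M p p).symm

lemma trace_stildeMap {N : ℕ} (hN : (N : ℂ) + d ≠ 0)
    (σ : Matrix (Fin dA × Fin d) (Fin dA × Fin d) ℂ) : (stildeMap N σ).trace = σ.trace := by
  rw [stildeMap, trace_add, trace_smul, trace_smul, trace_kronecker, trace_trB, trace_one,
    Fintype.card_fin, smul_eq_mul, smul_eq_mul]
  field_simp

lemma sub_stildeMap {N : ℕ} (hN : (N : ℝ) + d ≠ 0)
    (σ : Matrix (Fin dA × Fin d) (Fin dA × Fin d) ℂ) :
    σ - stildeMap N σ =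
      ((((N : ℝ) + d)⁻¹ : ℝ) : ℂ) • ((d : ℂ) • σ - trB σ ⊗ₖ (1 : Matrix (Fin d) (Fin d) ℂ)) := by
  have hNC : (N : ℂ) + d ≠ 0 := by exact_mod_cast hN
  ext p q
  simp only [stildeMap, Matrix.sub_apply, Matrix.add_apply, Matrix.smul_apply, smul_eq_mul]
  push_cast
  field_simp
  ring

end Stilde

theorem stmt17_general (dA d : ℕ)
    (ρ : Matrix (Fin dA × Fin d) (Fin dA × Fin d) ℂ)
    (hρsep : IsSeparable dA d ρ) (hρtr : ρ.trace = 1) :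
    ∀ δ : ℝ, 0 < δ → ∃ N : ℕ, 1 ≤ N ∧
      ∃ σ, MemStildeN dA d N σ ∧ σ.trace = 1 ∧ traceNorm (ρ - σ) < δ := by
  intro δ hδ
  set C := traceNorm ((d : ℂ) • ρ - trB ρ ⊗ₖ (1 : Matrix (Fin d) (Fin d) ℂ))
  obtain ⟨N, hN⟩ := exists_nat_gt (C / δ)
  have hpos : (0 : ℝ) < ((N + 1 : ℕ) : ℝ) + d := by positivity
  refine ⟨N + 1, Nat.le_add_left 1 N, stildeMap (N + 1) ρ, ⟨ρ, memSN_of_isSeparable hρsep, rfl⟩,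
    (trace_stildeMap (by exact_mod_cast hpos.ne') ρ).trans hρtr, ?_⟩
  rw [sub_stildeMap hpos.ne', traceNorm_ofReal_smul (inv_nonneg.mpr hpos.le),
    inv_mul_lt_iff₀ hpos]
  have hC : C < N * δ := (div_lt_iff₀ hδ).mp hN
  push_cast
  exact hC.trans_le (mul_le_mul_of_nonneg_right (by linarith [d.cast_nonneg (α := ℝ)]) hδ.le)

/-- for every separable state `ρ` and every `δ > 0` there are `N ≥ 1`
and a normalized `σ ∈ 𝒮̃^N` with `‖ρ - σ‖₁ < δ`: the union of the sets `𝒮̃^N` is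
trace-norm dense in the set of separable states. -/
theorem stmt17 (dA d : ℕ) (hdA : 1 ≤ dA) (hd : 1 ≤ d)
    (ρ : Matrix (Fin dA × Fin d) (Fin dA × Fin d) ℂ)
    (hρsep : IsSeparable dA d ρ) (hρtr : ρ.trace = 1) :
    ∀ δ : ℝ, 0 < δ → ∃ N : ℕ, 1 ≤ N ∧
      ∃ σ, MemStildeN dA d N σ ∧ σ.trace = 1 ∧ traceNorm (ρ - σ) < δ :=
  stmt17_general dA d ρ hρsep hρtr

end SepPaper
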